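/- Let S be a monoid, let (T, F) be a torsion theory of S-acts, and let A be an S-act. If ρ is a largest Rees congruence on A all of whose non-singleton classes belong to T (that is, ρ is a Rees congruence with Σ_ρ ⊆ T, and every Rees congruence on A whose non-singleton classes all belong to T is contained in ρ), then the Rees factor A/ρ belongs to F. -/

import Mathlib

universe u

/-- A (left) `S`-act: a type equipped with a monoid action of `S`. -/
structure SAct (S : Type u) [Monoid S] where
  carrier : Type u
  [mulAction : MulAction S carrier]

attribute [instance] SAct.mulAction

namespace SAct

variable {S : Type u} [Monoid S]

/-- A homomorphism of `S`-acts. -/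
def IsHom (A B : SAct S) (f : A.carrier → B.carrier) : Prop :=
  ∀ (s : S) (a : A.carrier), f (s • a) = s • f a

/-- A homomorphism is trivial if its image has at most one element. -/
def IsTrivialHom {A B : SAct S} (f : A.carrier → B.carrier) : Prop :=
  (Set.range f).Subsingleton

/-- Two `S`-acts are isomorphic if there is a bijective homomorphism between them. -/
def AreIso (A B : SAct S) : Prop :=
  ∃ f : A.carrier → B.carrier, IsHom A B f ∧ Function.Bijective f

/-- A subset of an `S`-act is a subact if it is closed under the action. -/
def IsSubact (A : SAct S) (B : Set A.carrier) : Prop :=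
  ∀ (s : S), ∀ a ∈ B, s • a ∈ B

/-- The `S`-act induced on a subact. -/
def sub (A : SAct S) (B : Set A.carrier) (h : IsSubact A B) : SAct S where
  carrier := ↥B
  mulAction :=
    { smul := fun s b => ⟨s • (b : A.carrier), h s b b.2⟩
      one_smul := fun b => Subtype.ext (one_smul S (b : A.carrier))
      mul_smul := fun s t b => Subtype.ext (mul_smul s t (b : A.carrier)) }

/-- A congruence on an `S`-act: an equivalence relation compatible with the action. -/
def IsActCon (A : SAct S) (ρ : Setoid A.carrier) : Prop :=
  ∀ (s : S) (a a' : A.carrier), ρ a a' → ρ (s • a) (s • a')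

/-- The quotient `S`-act of an `S`-act by a congruence. -/
def quot (A : SAct S) (ρ : Setoid A.carrier) (h : IsActCon A ρ) : SAct S where
  carrier := Quotient ρ
  mulAction :=
    { smul := fun s => Quotient.map (fun a => s • a) (fun a b hab => h s a b hab)
      one_smul := fun q => Quotient.inductionOn q (fun a => by
        show Quotient.map (fun a => (1 : S) • a) _ (Quotient.mk ρ a) = Quotient.mk ρ a
        rw [Quotient.map_mk, one_smul])
      mul_smul := fun s t q => Quotient.inductionOn q (fun a => by
        show Quotient.map (fun a => (s * t) • a) _ (Quotient.mk ρ a)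
            = Quotient.map (fun a => s • a) _ (Quotient.map (fun a => t • a) _ (Quotient.mk ρ a))
        rw [Quotient.map_mk, Quotient.map_mk, Quotient.map_mk, mul_smul]) }

/-- A system of pairwise disjoint non-trivial subacts of an `S`-act. -/
def IsSystem (A : SAct S) (Sys : Set (Set A.carrier)) : Prop :=
  (∀ B ∈ Sys, IsSubact A B ∧ ¬ B.Subsingleton) ∧
    (∀ B ∈ Sys, ∀ C ∈ Sys, B ≠ C → ∀ a ∈ B, a ∉ C)

/-- The Rees congruence determined by a system of pairwise disjoint
non-trivial subacts: `a` and `b` are related iff `a = b` or `a` and `b`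
lie in a common member of the system. -/
def reesSetoid (A : SAct S) (Sys : Set (Set A.carrier)) (hSys : IsSystem A Sys) :
    Setoid A.carrier where
  r a b := a = b ∨ ∃ B ∈ Sys, a ∈ B ∧ b ∈ B
  iseqv :=
    { refl := fun _ => Or.inl rfl
      symm := by
        rintro a b (rfl | ⟨B, hB, ha, hb⟩)
        · exact Or.inl rfl
        · exact Or.inr ⟨B, hB, hb, ha⟩
      trans := by
        rintro a b c (rfl | ⟨B, hB, ha, hb⟩) h2
        · exact h2
        · rcases h2 with rfl | ⟨C, hC, hb', hc⟩
          · exact Or.inr ⟨B, hB, ha, hb⟩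
          · by_cases hBC : B = C
            · exact Or.inr ⟨B, hB, ha, hBC ▸ hc⟩
            · exact absurd hb' (hSys.2 B hB C hC hBC b hb) }

/-- A Rees congruence is a congruence. -/
theorem reesSetoid_isActCon (A : SAct S) (Sys : Set (Set A.carrier)) (hSys : IsSystem A Sys) :
    IsActCon A (reesSetoid A Sys hSys) := by
  rintro s a a' (rfl | ⟨B, hB, ha, ha'⟩)
  · exact Or.inl rfl
  · exact Or.inr ⟨B, hB, (hSys.1 B hB).1 s a ha, (hSys.1 B hB).1 s a' ha'⟩

/-- The system of non-singleton classes of a congruence (for a Rees congruence,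
this is its system `Σ_ρ` of non-trivial subacts). -/
def nsClasses (A : SAct S) (ρ : Setoid A.carrier) : Set (Set A.carrier) :=
  {C | (∃ a, C = {x | ρ x a}) ∧ ¬ C.Subsingleton}

/-- A congruence is a Rees congruence if it arises from a system of pairwise
disjoint non-trivial subacts. -/
def IsRees (A : SAct S) (ρ : Setoid A.carrier) : Prop :=
  ∃ (Sys : Set (Set A.carrier)) (hSys : IsSystem A Sys), ρ = reesSetoid A Sys hSys

end SAct

open SAct

/-- A (normal) Hoehnke radical: an assignment of a congruence `rad A` to every
`S`-act `A`, functorial with respect to homomorphisms, and with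
`rad (A / rad A) = Δ`. -/
structure HoehnkeRadical (S : Type u) [Monoid S] where
  rad : (A : SAct S) → Setoid A.carrier
  isCon : ∀ A : SAct S, IsActCon A (rad A)
  functorial : ∀ {A B : SAct S} (f : A.carrier → B.carrier), IsHom A B f →
    ∀ a a' : A.carrier, rad A a a' → rad B (f a) (f a')
  rad_quot : ∀ A : SAct S, rad (A.quot (rad A) (isCon A)) = ⊥

namespace HoehnkeRadical

variable {S : Type u} [Monoid S]

/-- The radical class `R_r = {A : r(A) = ∇_A}` of a Hoehnke radical. -/
def radClass (r : HoehnkeRadical S) : Set (SAct S) := {A | r.rad A = ⊤}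

/-- The semisimple class `S_r = {A : r(A) = Δ_A}` of a Hoehnke radical. -/
def ssClass (r : HoehnkeRadical S) : Set (SAct S) := {A | r.rad A = ⊥}

/-- The pointwise order on Hoehnke radicals. -/
def le (r r' : HoehnkeRadical S) : Prop := ∀ A : SAct S, r.rad A ≤ r'.rad A

end HoehnkeRadical

/-- A Kurosh-Amitsur radical: a Hoehnke radical such that (i) every `rad A` is a
Rees congruence, (ii) every member of `Σ_{rad A}` is in the radical class, and
(iii) every system of pairwise disjoint non-trivial subacts belonging to the
radical class is below `Σ_{rad A}`. -/
structure KARadical (S : Type u) [Monoid S] extends HoehnkeRadical S where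
  rees : ∀ A : SAct S, IsRees A (rad A)
  cls_rad : ∀ A : SAct S, ∀ B ∈ nsClasses A (rad A), ∀ h : IsSubact A B,
    A.sub B h ∈ toHoehnkeRadical.radClass
  maximal : ∀ (A : SAct S) (Sys : Set (Set A.carrier)), IsSystem A Sys →
    (∀ B ∈ Sys, ∀ h : IsSubact A B, A.sub B h ∈ toHoehnkeRadical.radClass) →
    ∀ B ∈ Sys, ∃ C ∈ nsClasses A (rad A), B ⊆ C

/-- A torsion theory: a pair `(T, F)` of classes of `S`-acts, each closed under
isomorphism and containing all trivial acts, such that (1) every homomorphism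
from a member of `T` to a member of `F` is trivial, (2) `T` contains every act
all of whose homomorphisms into members of `F` are trivial, and (3) `F`
contains every act all of whose homomorphisms from members of `T` are trivial. -/
structure IsTorsionTheory {S : Type u} [Monoid S] (T F : Set (SAct S)) : Prop where
  iso_T : ∀ A B : SAct S, AreIso A B → A ∈ T → B ∈ T
  iso_F : ∀ A B : SAct S, AreIso A B → A ∈ F → B ∈ F
  trivial_T : ∀ A : SAct S, Subsingleton A.carrier → A ∈ T
  trivial_F : ∀ A : SAct S, Subsingleton A.carrier → A ∈ F
  hom_trivial : ∀ A ∈ T, ∀ B ∈ F, ∀ f : A.carrier → B.carrier,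
    IsHom A B f → IsTrivialHom (A := A) (B := B) f
  mem_T : ∀ A : SAct S,
    (∀ B ∈ F, ∀ f : A.carrier → B.carrier, IsHom A B f → IsTrivialHom (A := A) (B := B) f) →
    A ∈ T
  mem_F : ∀ B : SAct S,
    (∀ A ∈ T, ∀ f : A.carrier → B.carrier, IsHom A B f → IsTrivialHom (A := A) (B := B) f) →
    B ∈ F

/-- The product of a family of `S`-acts. -/
def prodAct {S : Type u} [Monoid S] (ι : Type u) (f : ι → SAct S) : SAct S where
  carrier := ∀ i, (f i).carrier
  mulAction := inferInstance

/-- The Hoehnke radical `r_C` determined by a class `C` closed under subacts and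
products: the meet of all congruences whose quotient lies in `C`. -/
def radC {S : Type u} [Monoid S] (C : Set (SAct S)) (A : SAct S) : Setoid A.carrier :=
  sInf {χ : Setoid A.carrier | ∃ h : IsActCon A χ, A.quot χ h ∈ C}

/-- The radical class `R_{r_C}` of the Hoehnke radical `r_C`. -/
def RradC {S : Type u} [Monoid S] (C : Set (SAct S)) : Set (SAct S) :=
  {A | radC C A = ⊤}

/-!
Let `ρ = ρ_Σ` and let `f : D → A/ρ` be a homomorphism from a torsion act `D`. Its image pulls
back to a subact `B` of `A`, and `B` is torsion: a homomorphism `g` from `B` to a torsion-free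
act is constant on the torsion classes of `ρ` inside `B`, so it factors through `f`, and `D` is
torsion. Since `B` alone forms a system of torsion subacts, maximality of `ρ` puts `B` inside a
single `ρ`-class, that is, the image of `f` is a point.
-/

namespace SAct

variable {S : Type u} [Monoid S]

theorem isHom_quotient_mk (A : SAct S) {ρ : Setoid A.carrier} (hc : IsActCon A ρ) :
    IsHom A (A.quot ρ hc) (Quotient.mk ρ) :=
  fun _ _ => rfl

theorem isSubact_preimage_range {A D : SAct S} {ρ : Setoid A.carrier} {hc : IsActCon A ρ}
    {f : D.carrier → (A.quot ρ hc).carrier} (hf : IsHom D (A.quot ρ hc) f) :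
    IsSubact A (Quotient.mk ρ ⁻¹' Set.range f) := by
  rintro s a ⟨d, hd⟩
  exact ⟨s • d, by rw [hf, hd, isHom_quotient_mk]⟩

theorem IsSystem.singleton {A : SAct S} {B : Set A.carrier} (hB : IsSubact A B)
    (hnt : ¬B.Subsingleton) : IsSystem A {B} :=
  ⟨fun _ hC => hC ▸ ⟨hB, hnt⟩, fun _ hB' _ hC hne => absurd (hB'.trans hC.symm) hne⟩

theorem reesSetoid_classOf {A : SAct S} {Sys : Set (Set A.carrier)} (hSys : IsSystem A Sys)
    {C : Set A.carrier} (hC : C ∈ Sys) {a : A.carrier} (ha : a ∈ C) :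
    {x | reesSetoid A Sys hSys x a} = C := by
  ext x
  refine ⟨?_, fun hx => Or.inr ⟨C, hC, hx, ha⟩⟩
  rintro (rfl | ⟨C', hC', hx, ha'⟩)
  · exact ha
  · by_contra hne
    exact hSys.2 C' hC' C hC (fun h => hne (h ▸ hx)) a ha' ha

theorem nsClasses_reesSetoid {A : SAct S} {Sys : Set (Set A.carrier)} (hSys : IsSystem A Sys) :
    nsClasses A (reesSetoid A Sys hSys) = Sys := by
  ext C
  constructor
  · rintro ⟨⟨a, rfl⟩, hnt⟩
    obtain ⟨x, hx, y, hy, hxy⟩ := Set.not_subsingleton_iff.mp hnt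
    have : ∃ C' ∈ Sys, a ∈ C' := by
      rcases hx with rfl | ⟨C', hC', -, ha⟩
      · rcases hy with rfl | ⟨C', hC', -, ha⟩
        · exact absurd rfl hxy
        · exact ⟨C', hC', ha⟩
      · exact ⟨C', hC', ha⟩
    obtain ⟨C', hC', ha⟩ := this
    rwa [reesSetoid_classOf hSys hC' ha]
  · intro hC
    have hnt := (hSys.1 C hC).2
    obtain ⟨a, ha, -⟩ := Set.not_subsingleton_iff.mp hnt
    exact ⟨⟨a, (reesSetoid_classOf hSys hC ha).symm⟩, hnt⟩

/-- Maximality is used only against the Rees congruence of the single subact `B`. -/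
theorem rel_of_mem_of_isLargest {T : Set (SAct S)} {A : SAct S} {ρ : Setoid A.carrier}
    (hmax : ∀ ρ' : Setoid A.carrier, IsRees A ρ' →
      (∀ C ∈ nsClasses A ρ', ∀ h : IsSubact A C, A.sub C h ∈ T) → ρ' ≤ ρ)
    {B : Set A.carrier} (hB : IsSubact A B) (hBT : A.sub B hB ∈ T)
    {a b : A.carrier} (ha : a ∈ B) (hb : b ∈ B) : ρ a b := by
  by_cases hnt : B.Subsingleton
  · exact hnt ha hb ▸ ρ.refl a
  have hSys := IsSystem.singleton hB hnt
  refine hmax _ ⟨_, hSys, rfl⟩ ?_ (Or.inr ⟨B, rfl, ha, hb⟩)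
  rintro C hC -
  rw [nsClasses_reesSetoid hSys] at hC
  subst hC
  exact hBT

end SAct

namespace IsTorsionTheory

variable {S : Type u} [Monoid S] {T F : Set (SAct S)}

theorem hom_eq (htt : IsTorsionTheory T F) {A B : SAct S} (hA : A ∈ T) (hB : B ∈ F)
    {f : A.carrier → B.carrier} (hf : IsHom A B f) (x y : A.carrier) : f x = f y :=
  htt.hom_trivial A hA B hB f hf ⟨x, rfl⟩ ⟨y, rfl⟩

variable (htt : IsTorsionTheory T F) {A : SAct S} {Sys : Set (Set A.carrier)}
  {hSys : IsSystem A Sys} (hT : ∀ C ∈ Sys, ∀ h : IsSubact A C, A.sub C h ∈ T)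
include htt hT

theorem hom_eq_of_reesSetoid {B : Set A.carrier} {hB : IsSubact A B}
    (hsat : ∀ a ∈ B, ∀ b, reesSetoid A Sys hSys b a → b ∈ B) {E : SAct S} (hE : E ∈ F)
    {g : (A.sub B hB).carrier → E.carrier} (hg : IsHom (A.sub B hB) E g)
    {a b : B} (hab : reesSetoid A Sys hSys a b) : g a = g b := by
  rcases hab with h | ⟨C, hC, ha, hb⟩
  · exact congrArg g (Subtype.ext h)
  have hCB : C ⊆ B := fun x hx => hsat a a.2 x (Or.inr ⟨C, hC, hx, ha⟩)
  have hC' := (hSys.1 C hC).1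
  exact htt.hom_eq (hT C hC hC') hE (f := g ∘ Set.inclusion hCB)
    (fun s x => hg s (Set.inclusion hCB x)) ⟨a, ha⟩ ⟨b, hb⟩

theorem preimage_range_mem {D : SAct S} (hD : D ∈ T) {hc : IsActCon A (reesSetoid A Sys hSys)}
    {f : D.carrier → (A.quot _ hc).carrier} (hf : IsHom D _ f) :
    A.sub _ (isSubact_preimage_range hf) ∈ T := by
  have hsat : ∀ a ∈ Quotient.mk _ ⁻¹' Set.range f, ∀ b, reesSetoid A Sys hSys b a →
      b ∈ Quotient.mk _ ⁻¹' Set.range f := fun a ha b hba => by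
    rwa [Set.mem_preimage, Quotient.sound hba]
  have hout : ∀ {d x}, f d = Quotient.mk _ x → reesSetoid A Sys hSys (f d).out x :=
    fun hd => Quotient.exact ((Quotient.out_eq _).trans hd)
  let rep : D.carrier → Quotient.mk _ ⁻¹' Set.range f :=
    fun d => ⟨(f d).out, d, (Quotient.out_eq _).symm⟩
  refine htt.mem_T _ fun E hE g hg => ?_
  have hrep : IsHom D E (g ∘ rep) := fun s d => by
    have : f (s • d) = Quotient.mk _ (s • (f d).out) :=
      (hf s d).trans <| (congrArg (fun q : (A.quot _ hc).carrier => s • q)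
        (Quotient.out_eq (f d)).symm).trans (isHom_quotient_mk A hc s _).symm
    exact (htt.hom_eq_of_reesSetoid hT hsat hE hg (hout this)).trans (hg s (rep d))
  rintro _ ⟨⟨a, d, hd⟩, rfl⟩ _ ⟨⟨b, d', hd'⟩, rfl⟩
  calc g ⟨a, d, hd⟩ = g (rep d) := (htt.hom_eq_of_reesSetoid hT hsat hE hg (hout hd)).symm
    _ = g (rep d') := htt.hom_eq hD hE hrep d d'
    _ = g ⟨b, d', hd'⟩ := htt.hom_eq_of_reesSetoid hT hsat hE hg (hout hd')

end IsTorsionTheory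

theorem largest_torsion_rees_factor_is_torsion_free (S : Type u) [Monoid S]
    (T F : Set (SAct S)) (htt : IsTorsionTheory T F)
    (A : SAct S) (ρ : Setoid A.carrier) (hrees : IsRees A ρ) (hc : IsActCon A ρ)
    (hcls : ∀ C ∈ nsClasses A ρ, ∀ h : IsSubact A C, A.sub C h ∈ T)
    (hmax : ∀ ρ' : Setoid A.carrier, IsRees A ρ' →
      (∀ C ∈ nsClasses A ρ', ∀ h : IsSubact A C, A.sub C h ∈ T) → ρ' ≤ ρ) :
    A.quot ρ hc ∈ F := by
  obtain ⟨Sys, hSys, rfl⟩ := hrees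
  have hT : ∀ C ∈ Sys, ∀ h : IsSubact A C, A.sub C h ∈ T := fun C hC =>
    hcls C ((nsClasses_reesSetoid hSys).symm ▸ hC)
  refine htt.mem_F _ fun D hD f hf => ?_
  have hBT := htt.preimage_range_mem hT hD hf
  rintro _ ⟨d₁, rfl⟩ _ ⟨d₂, rfl⟩
  rw [← Quotient.out_eq (f d₁), ← Quotient.out_eq (f d₂)]
  exact Quotient.sound <| rel_of_mem_of_isLargest hmax _ hBT
    ⟨d₁, (Quotient.out_eq _).symm⟩ ⟨d₂, (Quotient.out_eq _).symm⟩
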